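/- arXiv:2507.00738 — 4 statements merged into one kernel-verified Lean document; each statement's English description precedes it below -/
import Mathlib

section
/- Let N be an even squarefree positive integer, write N = 2N' with N' odd, let P be an odd prime with P ∤ N, let r ≥ 1 and d ≥ 1 be integers with 4d² | r²N² − 4P²N. Then (r²N² − 4P²N)/(4d²) = (r²N'² − 2P²N')/d² is not congruent to 0 or 1 modulo 4. -/
/-!
Since `N = 2N'`, the quotient is `M / d²` with `M = (rN')² − 2P²N'`. As `P²N'` is odd and squares
are `0` or `1` mod 4, `M ≡ 2` or `3 (mod 4)`. In particular `4 ∤ M`, so `d` is odd, `d² ≡ 1 (mod 4)`,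
and `M / d² ≡ M (mod 4)`.
-/

namespace Int

theorem sq_emod_four_eq_zero_or_one (x : ℤ) : x ^ 2 % 4 = 0 ∨ x ^ 2 % 4 = 1 := by
  rcases x.even_or_odd with ⟨k, rfl⟩ | hx
  · exact Or.inl (emod_eq_zero_of_dvd ⟨k ^ 2, by ring⟩)
  · exact Or.inr (sq_mod_four_eq_one_of_odd hx)

theorem sq_sub_two_mul_emod_four_of_odd (x : ℤ) {y : ℤ} (hy : Odd y) :
    (x ^ 2 - 2 * y) % 4 = 2 ∨ (x ^ 2 - 2 * y) % 4 = 3 := by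
  obtain ⟨k, rfl⟩ := hy
  have := sq_emod_four_eq_zero_or_one x
  omega

theorem emod_four_eq_of_eq_sq_mul {M d Q : ℤ} (h : M = d ^ 2 * Q)
    (hM : M % 4 = 2 ∨ M % 4 = 3) : Q % 4 = M % 4 := by
  subst h
  rw [mul_emod] at hM ⊢
  rcases sq_emod_four_eq_zero_or_one d with hd | hd <;> simp [hd] at hM ⊢

end Int

theorem stmt5_general (N N' : ℕ) (hNeven : N = 2 * N') (hN' : Odd N')
    (P : ℕ) (hP : P.Prime) (hPodd : P ≠ 2)
    (r d : ℕ)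
    (hdvd : ((4 : ℤ) * (d : ℤ) ^ 2) ∣ ((r : ℤ) ^ 2 * (N : ℤ) ^ 2 - 4 * (P : ℤ) ^ 2 * (N : ℤ))) :
    ((r : ℤ) ^ 2 * (N : ℤ) ^ 2 - 4 * (P : ℤ) ^ 2 * (N : ℤ)) / (4 * (d : ℤ) ^ 2)
      = ((r : ℤ) ^ 2 * (N' : ℤ) ^ 2 - 2 * (P : ℤ) ^ 2 * (N' : ℤ)) / (d : ℤ) ^ 2 ∧
    ¬ ((((r : ℤ) ^ 2 * (N : ℤ) ^ 2 - 4 * (P : ℤ) ^ 2 * (N : ℤ)) / (4 * (d : ℤ) ^ 2)) % 4 = 0 ∨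
       (((r : ℤ) ^ 2 * (N : ℤ) ^ 2 - 4 * (P : ℤ) ^ 2 * (N : ℤ)) / (4 * (d : ℤ) ^ 2)) % 4 = 1) := by
  set M : ℤ := (r : ℤ) ^ 2 * (N' : ℤ) ^ 2 - 2 * (P : ℤ) ^ 2 * (N' : ℤ)
  have hA : (r : ℤ) ^ 2 * (N : ℤ) ^ 2 - 4 * (P : ℤ) ^ 2 * (N : ℤ) = 4 * M := by
    subst hNeven; push_cast; ring
  have hquot : ((r : ℤ) ^ 2 * (N : ℤ) ^ 2 - 4 * (P : ℤ) ^ 2 * (N : ℤ)) / (4 * (d : ℤ) ^ 2)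
      = M / (d : ℤ) ^ 2 := by
    rw [hA, Int.mul_ediv_mul_of_pos _ _ four_pos]
  have hdM : (d : ℤ) ^ 2 ∣ M := by
    rwa [hA, mul_dvd_mul_iff_left four_ne_zero] at hdvd
  have hM : M % 4 = 2 ∨ M % 4 = 3 := by
    have hodd : Odd ((P : ℤ) ^ 2 * N') := by exact_mod_cast (hP.odd_of_ne_two hPodd).pow.mul hN'
    rw [show M = ((r : ℤ) * N') ^ 2 - 2 * ((P : ℤ) ^ 2 * N') by simp only [M]; ring]
    exact Int.sq_sub_two_mul_emod_four_of_odd _ hodd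
  refine ⟨hquot, ?_⟩
  rw [hquot, Int.emod_four_eq_of_eq_sq_mul (Int.mul_ediv_cancel' hdM).symm hM]
  omega

/-- For even squarefree `N = 2N'` with `N'` odd, an odd prime `P ∤ N`, and `r, d ≥ 1`
with `4d² ∣ r²N² − 4P²N`, the quotient `(r²N² − 4P²N)/(4d²) = (r²N'² − 2P²N')/d²`
is not congruent to 0 or 1 modulo 4. -/
theorem stmt5 (N N' : ℕ) (hN : Squarefree N) (hNeven : N = 2 * N') (hN' : Odd N')
    (P : ℕ) (hP : P.Prime) (hPodd : P ≠ 2) (hPN : ¬ P ∣ N)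
    (r d : ℕ) (hr : 1 ≤ r) (hd : 1 ≤ d)
    (hdvd : ((4 : ℤ) * (d : ℤ) ^ 2) ∣ ((r : ℤ) ^ 2 * (N : ℤ) ^ 2 - 4 * (P : ℤ) ^ 2 * (N : ℤ))) :
    ((r : ℤ) ^ 2 * (N : ℤ) ^ 2 - 4 * (P : ℤ) ^ 2 * (N : ℤ)) / (4 * (d : ℤ) ^ 2)
      = ((r : ℤ) ^ 2 * (N' : ℤ) ^ 2 - 2 * (P : ℤ) ^ 2 * (N' : ℤ)) / (d : ℤ) ^ 2 ∧
    ¬ ((((r : ℤ) ^ 2 * (N : ℤ) ^ 2 - 4 * (P : ℤ) ^ 2 * (N : ℤ)) / (4 * (d : ℤ) ^ 2)) % 4 = 0 ∨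
       (((r : ℤ) ^ 2 * (N : ℤ) ^ 2 - 4 * (P : ℤ) ^ 2 * (N : ℤ)) / (4 * (d : ℤ) ^ 2)) % 4 = 1) :=
  stmt5_general N N' hNeven hN' P hP hPodd r d hdvd
end

section
/- With η(m) = ∏_{p | m} p/(p+1) and A = ∏_p (1 + p/((p+1)²(p−1))), one has ∑_{m=1}^∞ η(2m)/m² = (8/11)·A. -/
/-- The multiplicative function `η(m) = ∏_{p ∣ m} p/(p+1)`. -/
noncomputable def eta (m : ℕ) : ℝ := ∏ p ∈ m.primeFactors, (p : ℝ) / ((p : ℝ) + 1)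

noncomputable def uaux (m : ℕ) : ℝ :=
  ∏ p ∈ m.primeFactors.erase 2, (p : ℝ) / ((p : ℝ) + 1)

lemma factor_nonneg (p : ℕ) : (0:ℝ) ≤ (p : ℝ) / ((p : ℝ) + 1) := by positivity

lemma factor_le_one (p : ℕ) : (p : ℝ) / ((p : ℝ) + 1) ≤ 1 := by
  rw [div_le_one (by positivity)]; linarith

lemma eta_nonneg (m : ℕ) : 0 ≤ eta m :=
  Finset.prod_nonneg fun p _ => factor_nonneg p

lemma eta_le_one (m : ℕ) : eta m ≤ 1 :=
  Finset.prod_le_one (fun p _ => factor_nonneg p) (fun p _ => factor_le_one p)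

lemma uaux_nonneg (m : ℕ) : 0 ≤ uaux m :=
  Finset.prod_nonneg fun p _ => factor_nonneg p

lemma uaux_le_one (m : ℕ) : uaux m ≤ 1 :=
  Finset.prod_le_one (fun p _ => factor_nonneg p) (fun p _ => factor_le_one p)

lemma eta_one : eta 1 = 1 := by simp [eta]

lemma eta_mul {m n : ℕ} (h : Nat.Coprime m n) (hm : m ≠ 0) (hn : n ≠ 0) :
    eta (m * n) = eta m * eta n := by
  unfold eta
  rw [Nat.primeFactors_mul hm hn,
    Finset.prod_union (h.disjoint_primeFactors)]

lemma uaux_mul {m n : ℕ} (h : Nat.Coprime m n) (hm : m ≠ 0) (hn : n ≠ 0) :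
    uaux (m * n) = uaux m * uaux n := by
  unfold uaux
  rw [Nat.primeFactors_mul hm hn, Finset.erase_union_distrib,
    Finset.prod_union (Finset.disjoint_of_subset_left (Finset.erase_subset _ _)
      (Finset.disjoint_of_subset_right (Finset.erase_subset _ _)
        h.disjoint_primeFactors))]

lemma eta_two_mul {m : ℕ} (hm : m ≠ 0) : eta (2 * m) = 2 / 3 * uaux m := by
  unfold eta uaux
  rw [Nat.primeFactors_mul (by norm_num) hm, Nat.Prime.primeFactors Nat.prime_two]
  have : ({2} : Finset ℕ) ∪ m.primeFactors = insert 2 (m.primeFactors.erase 2) := by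
    ext x
    simp only [Finset.mem_union, Finset.mem_singleton, Finset.mem_insert, Finset.mem_erase]
    by_cases hx : x = 2 <;> simp [hx]
  rw [this, Finset.prod_insert (Finset.notMem_erase _ _)]
  norm_num

/-- the even-part-normalized multiplicative function -/
noncomputable def gfun (m : ℕ) : ℝ := uaux m / (m : ℝ) ^ 2

/-- the full multiplicative function -/
noncomputable def hfun (m : ℕ) : ℝ := eta m / (m : ℝ) ^ 2

lemma gfun_mul : ∀ {m n : ℕ}, Nat.Coprime m n → gfun (m * n) = gfun m * gfun n := by
  intro m n h
  rcases eq_or_ne m 0 with rfl | hm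
  · simp [gfun]
  rcases eq_or_ne n 0 with rfl | hn
  · simp [gfun]
  unfold gfun
  rw [uaux_mul h hm hn]
  push_cast
  rw [mul_pow, div_mul_div_comm]

lemma hfun_mul : ∀ {m n : ℕ}, Nat.Coprime m n → hfun (m * n) = hfun m * hfun n := by
  intro m n h
  rcases eq_or_ne m 0 with rfl | hm
  · simp [hfun]
  rcases eq_or_ne n 0 with rfl | hn
  · simp [hfun]
  unfold hfun
  rw [eta_mul h hm hn]
  push_cast
  rw [mul_pow, div_mul_div_comm]

lemma summable_aux {F : ℕ → ℝ} (h0 : ∀ m, 0 ≤ F m) (h1 : ∀ m, F m ≤ 1) :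
    Summable (fun m : ℕ => ‖F m / (m : ℝ) ^ 2‖) := by
  have hs : Summable (fun m : ℕ => 1 / (m : ℝ) ^ 2) :=
    Real.summable_one_div_nat_pow.mpr one_lt_two
  refine Summable.of_nonneg_of_le (fun m => norm_nonneg _) (fun m => ?_) hs
  rw [Real.norm_eq_abs, abs_div, abs_of_nonneg (h0 m), abs_of_nonneg (by positivity)]
  gcongr
  exact h1 m

lemma cast_pos_of_prime {p : ℕ} (hp : p.Prime) : (2:ℝ) ≤ (p:ℝ) := by
  exact_mod_cast hp.two_le

/-- the generic Euler factor computation -/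
lemma tsum_factor_aux (p : ℕ) (hp : p.Prime) :
    ∑' e : ℕ, eta (p ^ e) / ((p : ℝ) ^ e) ^ 2
      = 1 + (p : ℝ) / (((p : ℝ) + 1) ^ 2 * ((p : ℝ) - 1)) := by
  have hp2 : (2:ℝ) ≤ (p:ℝ) := cast_pos_of_prime hp
  set r : ℝ := (((p : ℝ)) ^ 2)⁻¹ with hr_def
  have hr0 : 0 ≤ r := by positivity
  have hr1 : r < 1 := by
    rw [hr_def, inv_lt_one_iff₀]
    right; nlinarith
  have key : ∀ e : ℕ, eta (p ^ e) / ((p : ℝ) ^ e) ^ 2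
      = ((p : ℝ) / ((p : ℝ) + 1)) * r ^ e + (if e = 0 then (1 : ℝ) / ((p : ℝ) + 1) else 0) := by
    intro e
    rcases eq_or_ne e 0 with rfl | he
    · simp only [pow_zero, eta_one, if_pos rfl, ↓reduceIte]
      rw [one_pow]
      field_simp
    · have hpf : (p ^ e).primeFactors = {p} := Nat.primeFactors_prime_pow he hp
      have : eta (p ^ e) = (p : ℝ) / ((p : ℝ) + 1) := by
        unfold eta; rw [hpf, Finset.prod_singleton]
      rw [this, if_neg he, add_zero, hr_def, div_eq_mul_inv, ← pow_mul,
        Nat.mul_comm e 2, pow_mul, inv_pow]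
  rw [tsum_congr key]
  have hs1 : Summable (fun e : ℕ => ((p : ℝ) / ((p : ℝ) + 1)) * r ^ e) :=
    (summable_geometric_of_lt_one hr0 hr1).mul_left _
  have hs2 : Summable (fun e : ℕ => (if e = 0 then (1 : ℝ) / ((p : ℝ) + 1) else 0)) := by
    apply summable_of_ne_finset_zero (s := {0})
    intro e he
    simp only [Finset.mem_singleton] at he
    simp [he]
  rw [Summable.tsum_add hs1 hs2, tsum_mul_left, tsum_geometric_of_lt_one hr0 hr1]
  have h0 : ∑' e : ℕ, (if e = 0 then (1 : ℝ) / ((p : ℝ) + 1) else 0) = 1 / ((p : ℝ) + 1) := by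
    rw [tsum_eq_single 0]
    · simp
    · intro e he; simp [he]
  rw [h0, hr_def]
  have h1 : (p:ℝ) + 1 ≠ 0 := by linarith
  have h2 : (p:ℝ) - 1 ≠ 0 := by intro h; nlinarith
  have h3 : (p:ℝ) ≠ 0 := by linarith
  have h5 : (p:ℝ)^2 - 1 ≠ 0 := by nlinarith
  have h6 : (1 - ((p:ℝ)^2)⁻¹) = ((p:ℝ)^2 - 1) / (p:ℝ)^2 := by field_simp
  rw [h6, inv_div]
  field_simp
  ring

lemma gfun_factor_two : ∑' e : ℕ, gfun (2 ^ e) = 4 / 3 := by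
  have key : ∀ e : ℕ, gfun (2 ^ e) = ((4:ℝ)⁻¹) ^ e := by
    intro e
    unfold gfun uaux
    have : ((2:ℕ) ^ e).primeFactors.erase 2 = ∅ := by
      rcases eq_or_ne e 0 with rfl | he
      · simp
      · rw [Nat.primeFactors_prime_pow he Nat.prime_two]
        simp
    rw [this, Finset.prod_empty]
    push_cast
    rw [one_div, ← pow_mul, Nat.mul_comm, pow_mul, ← inv_pow]
    norm_num
  rw [tsum_congr key, tsum_geometric_of_lt_one (by norm_num) (by norm_num)]
  norm_num

lemma gfun_factor_odd (p : ℕ) (hp : p.Prime) (hp2 : p ≠ 2) :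
    ∑' e : ℕ, gfun (p ^ e)
      = 1 + (p : ℝ) / (((p : ℝ) + 1) ^ 2 * ((p : ℝ) - 1)) := by
  have key : ∀ e : ℕ, gfun (p ^ e) = eta (p ^ e) / ((p : ℝ) ^ e) ^ 2 := by
    intro e
    unfold gfun uaux eta
    rcases eq_or_ne e 0 with rfl | he
    · simp
    · rw [Nat.primeFactors_prime_pow he hp]
      have : ({p} : Finset ℕ).erase 2 = {p} := by
        rw [Finset.erase_eq_self]
        simp [Ne.symm hp2]
      rw [this]
      push_cast
      ring_nf
  rw [tsum_congr key, tsum_factor_aux p hp]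

lemma hfun_factor (p : ℕ) (hp : p.Prime) :
    ∑' e : ℕ, hfun (p ^ e)
      = 1 + (p : ℝ) / (((p : ℝ) + 1) ^ 2 * ((p : ℝ) - 1)) := by
  have key : ∀ e : ℕ, hfun (p ^ e) = eta (p ^ e) / ((p : ℝ) ^ e) ^ 2 := by
    intro e; unfold hfun; push_cast; ring_nf
  rw [tsum_congr key, tsum_factor_aux p hp]

/-- With `A = ∏_p (1 + p/((p+1)²(p−1)))`, one has `∑_{m ≥ 1} η(2m)/m² = (8/11)A`. -/
theorem stmt11 :
    (∑' m : ℕ, eta (2 * m) / (m : ℝ) ^ 2)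
      = (8 / 11) *
        ∏' p : Nat.Primes, (1 + (p.1 : ℝ) / (((p.1 : ℝ) + 1) ^ 2 * ((p.1 : ℝ) - 1))) := by
  -- Euler products
  have hg1 : gfun 1 = 1 := by simp [gfun, uaux]
  have hh1 : hfun 1 = 1 := by simp [hfun, eta_one]
  have hgsum : Summable (fun m => ‖gfun m‖) :=
    summable_aux uaux_nonneg uaux_le_one
  have hhsum : Summable (fun m => ‖hfun m‖) :=
    summable_aux eta_nonneg eta_le_one
  have hg0 : gfun 0 = 0 := by simp [gfun]
  have hh0 : hfun 0 = 0 := by simp [hfun]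
  have HG : HasProd (fun p : Nat.Primes => ∑' e : ℕ, gfun (p.1 ^ e)) (∑' m, gfun m) :=
    EulerProduct.eulerProduct_hasProd hg1 gfun_mul hgsum hg0
  have HH : HasProd (fun p : Nat.Primes => ∑' e : ℕ, hfun (p.1 ^ e)) (∑' m, hfun m) :=
    EulerProduct.eulerProduct_hasProd hh1 hfun_mul hhsum hh0
  -- identify the h-Euler factors with the explicit product
  have hHfac : (fun p : Nat.Primes => ∑' e : ℕ, hfun (p.1 ^ e))
      = fun p : Nat.Primes => (1 + (p.1 : ℝ) / (((p.1 : ℝ) + 1) ^ 2 * ((p.1 : ℝ) - 1))) := by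
    funext p; exact hfun_factor p.1 p.2
  rw [hHfac] at HH
  -- the correcting factor
  set P2 : Nat.Primes := ⟨2, Nat.prime_two⟩ with hP2
  set c : Nat.Primes → ℝ := fun p => if p = P2 then (12:ℝ)/11 else 1 with hc
  have Hc : HasProd c ((12:ℝ)/11) := by
    have := hasProd_single (f := c) P2 (fun b hb => by simp [hc, hb])
    simpa [hc] using this
  have HCH : HasProd (fun p : Nat.Primes =>
      c p * (1 + (p.1 : ℝ) / (((p.1 : ℝ) + 1) ^ 2 * ((p.1 : ℝ) - 1))))
      (12/11 * ∏' p : Nat.Primes, (1 + (p.1 : ℝ) / (((p.1 : ℝ) + 1) ^ 2 * ((p.1 : ℝ) - 1)))) := by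
    have := Hc.mul HH.multipliable.hasProd
    rwa [HH.tprod_eq] at this ⊢
  -- the g-Euler factors equal c * h-factors
  have hGfac : (fun p : Nat.Primes => ∑' e : ℕ, gfun (p.1 ^ e))
      = fun p : Nat.Primes =>
        c p * (1 + (p.1 : ℝ) / (((p.1 : ℝ) + 1) ^ 2 * ((p.1 : ℝ) - 1))) := by
    funext p
    rcases eq_or_ne p P2 with rfl | hne
    · simp only [hc, if_pos rfl, hP2, ↓reduceIte]
      rw [gfun_factor_two]
      norm_num
      rfl
    · have hp2 : p.1 ≠ 2 := by
        intro h
        apply hne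
        exact Subtype.ext h
      rw [gfun_factor_odd p.1 p.2 hp2, hc]
      simp [hne]
  rw [hGfac] at HG
  have key : (∑' m, gfun m)
      = 12/11 * ∏' p : Nat.Primes, (1 + (p.1 : ℝ) / (((p.1 : ℝ) + 1) ^ 2 * ((p.1 : ℝ) - 1))) :=
    HG.unique HCH
  -- relate the original sum to ∑ g
  have hpt : ∀ m : ℕ, eta (2 * m) / (m : ℝ) ^ 2 = (2/3) * gfun m := by
    intro m
    rcases eq_or_ne m 0 with rfl | hm
    · simp [gfun]
    · rw [eta_two_mul hm]
      unfold gfun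
      ring
  rw [tsum_congr hpt, tsum_mul_left, key]
  ring
end

section
/- Fix σ with 0 < σ ≤ 1 and a prime P. For a positive integer n write n = x²·y·2^α·P^β with y squarefree and gcd(xy, 2P) = 1, and set w(n) = ∏_{p | y} √p/2. Then ∑_{n > Y^σ} 1/(n·w(n)) = O_ε(Y^{−σ/2 + ε}) as Y → ∞. -/
open Finset

def S17 (P n : ℕ) : Finset ℕ :=
  n.primeFactors.filter (fun p => p ≠ 2 ∧ p ≠ P ∧ Odd (n.factorization p))

def y17 (P n : ℕ) : ℕ := ∏ p ∈ S17 P n, p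
def a17 (n : ℕ) : ℕ := n.factorization 2
def b17 (P n : ℕ) : ℕ := if P = 2 then 0 else n.factorization P
def m17 (P n : ℕ) : ℕ := y17 P n * 2 ^ a17 n * P ^ b17 P n
def x17 (P n : ℕ) : ℕ := Nat.sqrt (n / m17 P n)

lemma S17_prime {P n p : ℕ} (hp : p ∈ S17 P n) : p.Prime := by
  simp only [S17, mem_filter, Nat.mem_primeFactors] at hp
  exact hp.1.1

lemma y17_ne_zero (P n : ℕ) : y17 P n ≠ 0 :=
  Finset.prod_ne_zero_iff.mpr (fun p hp => (S17_prime hp).ne_zero)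

lemma y17_factorization (P n q : ℕ) :
    (y17 P n).factorization q = if q ∈ S17 P n then 1 else 0 := by
  rw [y17, Nat.factorization_prod (fun p hp => (S17_prime hp).ne_zero)]
  rw [Finsupp.finset_sum_apply]
  rw [Finset.sum_congr rfl (fun p hp => by
    rw [(S17_prime hp).factorization, Finsupp.single_apply])]
  exact Finset.sum_ite_eq' (S17 P n) q (fun _ => 1)

lemma m17_ne_zero {P : ℕ} (hP : P.Prime) (n : ℕ) : m17 P n ≠ 0 :=
  mul_ne_zero (mul_ne_zero (y17_ne_zero P n) (pow_ne_zero _ two_ne_zero))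
    (pow_ne_zero _ hP.ne_zero)

lemma m17_factorization {P : ℕ} (hP : P.Prime) (n q : ℕ) :
    (m17 P n).factorization q =
      (if q ∈ S17 P n then 1 else 0) + (if 2 = q then a17 n else 0)
        + (if P = q then b17 P n else 0) := by
  rw [m17, Nat.factorization_mul
      (mul_ne_zero (y17_ne_zero P n) (pow_ne_zero _ two_ne_zero))
      (pow_ne_zero _ hP.ne_zero),
    Nat.factorization_mul (y17_ne_zero P n) (pow_ne_zero _ two_ne_zero)]
  rw [Nat.Prime.factorization_pow hP,
    Nat.Prime.factorization_pow Nat.prime_two]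
  simp only [Finsupp.add_apply, Finsupp.single_apply, y17_factorization]

lemma two_not_mem_S17 (P n : ℕ) : 2 ∉ S17 P n := by
  simp [S17]

lemma P_not_mem_S17 (P n : ℕ) : P ∉ S17 P n := by
  simp [S17]

lemma m17_dvd {P : ℕ} (hP : P.Prime) {n : ℕ} (hn : n ≠ 0) : m17 P n ∣ n := by
  rw [← Nat.factorization_le_iff_dvd (m17_ne_zero hP n) hn]
  rw [Finsupp.le_def]
  intro q
  rw [m17_factorization hP]
  by_cases hq2 : 2 = q
  · subst hq2
    simp only [two_not_mem_S17, if_false, if_true, zero_add]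
    by_cases hP2 : P = 2
    · simp [hP2, b17, a17]
    · simp [hP2, a17]
  · by_cases hqP : P = q
    · subst hqP
      have hP2 : P ≠ 2 := fun h => hq2 (h ▸ rfl)
      simp [P_not_mem_S17, hq2, b17, hP2]
    · by_cases hqS : q ∈ S17 P n
      · simp only [hqS, if_true, hq2, if_false, hqP, add_zero]
        have := hqS
        simp only [S17, mem_filter, Nat.mem_primeFactors] at this
        obtain ⟨k, hk⟩ := this.2.2.2
        omega
      · simp [hqS, hq2, hqP]

lemma even_div_m17 {P : ℕ} (hP : P.Prime) {n : ℕ} (hn : n ≠ 0) (q : ℕ) :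
    Even ((n / m17 P n).factorization q) := by
  rw [Nat.factorization_div (m17_dvd hP hn), Finsupp.tsub_apply,
    m17_factorization hP]
  by_cases hq2 : 2 = q
  · subst hq2
    simp only [two_not_mem_S17, if_false, if_true, zero_add]
    by_cases hP2 : P = 2
    · simp [hP2, b17, a17]
    · simp [hP2, a17]
  · by_cases hqP : P = q
    · subst hqP
      have hP2 : P ≠ 2 := fun h => hq2 (h ▸ rfl)
      simp [P_not_mem_S17, hq2, b17, hP2]
    · by_cases hqS : q ∈ S17 P n
      · simp only [hqS, if_true, hq2, if_false, hqP, add_zero]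
        have := hqS
        simp only [S17, mem_filter, Nat.mem_primeFactors] at this
        obtain ⟨k, hk⟩ := this.2.2.2
        rw [hk]
        exact ⟨k, by omega⟩
      · simp only [hqS, if_false, hq2, hqP, add_zero, Nat.sub_zero]
        by_cases hqpf : q ∈ n.primeFactors
        · have hqpf' := hqpf
          simp only [Nat.mem_primeFactors] at hqpf'
          rcases Nat.even_or_odd (n.factorization q) with he | ho
          · exact he
          · exfalso
            apply hqS
            simp only [S17, mem_filter]
            refine ⟨hqpf, ?_, ?_, ho⟩
            · intro h; exact hq2 h.symm
            · intro h; exact hqP h.symm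
        · rw [← Nat.support_factorization, Finsupp.notMem_support_iff] at hqpf
          simp [hqpf]

lemma sq_of_even_factorization {n : ℕ} (hn : n ≠ 0)
    (h : ∀ q, Even (n.factorization q)) :
    (∏ p ∈ n.primeFactors, p ^ (n.factorization p / 2)) *
      (∏ p ∈ n.primeFactors, p ^ (n.factorization p / 2)) = n := by
  rw [← Finset.prod_mul_distrib]
  have h2 : ∏ p ∈ n.primeFactors, (p ^ (n.factorization p / 2) *
      p ^ (n.factorization p / 2)) = ∏ p ∈ n.primeFactors, p ^ n.factorization p :=
    Finset.prod_congr rfl (fun p _ => by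
      rw [← pow_add]
      congr 1
      obtain ⟨k, hk⟩ := h p
      omega)
  have h3 : n.factorization.prod (· ^ ·) = ∏ p ∈ n.primeFactors, p ^ n.factorization p := by
    rw [Finsupp.prod, Nat.support_factorization]
  rw [h2, ← h3, Nat.factorization_prod_pow_eq_self hn]

lemma x17_spec {P : ℕ} (hP : P.Prime) {n : ℕ} (hn : n ≠ 0) :
    x17 P n ^ 2 * m17 P n = n := by
  set r := ∏ p ∈ (n / m17 P n).primeFactors,
      p ^ ((n / m17 P n).factorization p / 2) with hr
  have hsq : r * r = n / m17 P n := sq_of_even_factorization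
    ((Nat.div_ne_zero_iff_of_dvd (m17_dvd hP hn)).mpr ⟨hn, m17_ne_zero hP n⟩)
    (even_div_m17 hP hn)
  have hx : x17 P n = r := by
    rw [x17]
    conv_lhs => rw [← hsq]
    exact Nat.sqrt_eq r
  rw [pow_two, hx, hsq]
  exact Nat.div_mul_cancel (m17_dvd hP hn)

/-- For `n = x²·y·2^α·P^β` with `y` squarefree and `gcd(xy, 2P) = 1`,
`w(n) = ∏_{p ∣ y} √p / 2`; equivalently the product is over the odd prime
divisors of `n` other than `P` occurring to an odd power. -/
noncomputable def w (P n : ℕ) : ℝ :=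
  ∏ p ∈ n.primeFactors.filter (fun p => p ≠ 2 ∧ p ≠ P ∧ Odd (n.factorization p)),
    Real.sqrt p / 2

lemma w_eq (P n : ℕ) : w P n = ∏ p ∈ S17 P n, Real.sqrt p / 2 := rfl

lemma w_pos (P n : ℕ) : 0 < w P n := by
  rw [w_eq]
  apply Finset.prod_pos
  intro p hp
  have hp2 := (S17_prime hp).two_le
  have : (0:ℝ) < p := by exact_mod_cast Nat.lt_of_lt_of_le Nat.zero_lt_two hp2
  positivity

lemma i17_key {P : ℕ} (hP : P.Prime) (n : ℕ) :
    x17 P n ^ 2 * (y17 P n * 2 ^ a17 n * P ^ b17 P n) = n := by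
  rcases eq_or_ne n 0 with rfl | hn
  · simp [x17, m17, y17, S17, a17, b17]
  · exact x17_spec hP hn

lemma i17_injective {P : ℕ} (hP : P.Prime) :
    Function.Injective (fun n => (x17 P n, y17 P n, a17 n, b17 P n) :
      ℕ → ℕ × ℕ × ℕ × ℕ) := by
  intro n m h
  simp only [Prod.mk.injEq] at h
  rw [← i17_key hP n, ← i17_key hP m, h.1, h.2.1, h.2.2.1, h.2.2.2]

lemma rpow_base_antitone {a b t : ℝ} (ha : 0 < a) (hab : a ≤ b) (ht : t ≤ 0) :
    b ^ t ≤ a ^ t := by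
  have hb : (0:ℝ) < b := lt_of_lt_of_le ha hab
  rw [← neg_neg t, Real.rpow_neg ha.le, Real.rpow_neg hb.le]
  have h1 : a ^ (-t) ≤ b ^ (-t) := Real.rpow_le_rpow ha.le hab (by linarith)
  exact inv_anti₀ (Real.rpow_pos_of_pos ha _) h1

lemma w_lower {P : ℕ} (hP : P.Prime) {η : ℝ} (hη : 0 < η) :
    ∃ c : ℝ, 0 < c ∧ ∀ n, c * (y17 P n : ℝ) ^ ((1:ℝ)/2 - η) ≤ w P n := by
  classical
  set B := ⌈(2:ℝ) ^ (1/η)⌉₊ with hB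
  set T := (Finset.range (B+1)).filter Nat.Prime with hT
  refine ⟨∏ p ∈ T, min 1 ((p:ℝ) ^ η / 2), ?_, ?_⟩
  · apply Finset.prod_pos
    intro p hp
    have hpp : p.Prime := (Finset.mem_filter.mp hp).2
    have hp0 : (0:ℝ) < p := by exact_mod_cast hpp.pos
    exact lt_min one_pos (div_pos (Real.rpow_pos_of_pos hp0 _) two_pos)
  · intro n
    set S := S17 P n with hS
    have hppos : ∀ p ∈ S, (0:ℝ) < (p:ℝ) := fun p hp => by
      exact_mod_cast (S17_prime hp).pos
    -- y ^ (1/2 - η) as a product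
    have hyprod : ((y17 P n : ℝ)) ^ ((1:ℝ)/2 - η) =
        ∏ p ∈ S, (p:ℝ) ^ ((1:ℝ)/2 - η) := by
      rw [y17, Nat.cast_prod]
      exact (Real.finset_prod_rpow S _ (fun p hp => (hppos p hp).le) _).symm
    -- the min-product over S is at least c
    have hstep1 : ∏ p ∈ T, min 1 ((p:ℝ) ^ η / 2) ≤
        ∏ p ∈ S, min 1 ((p:ℝ) ^ η / 2) := by
      have hsplit := Finset.prod_filter_mul_prod_filter_not S (fun p => p < B + 1)
        (fun p => min 1 ((p:ℝ) ^ η / 2))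
      have hone : ∏ p ∈ S.filter (fun p => ¬ p < B + 1), min 1 ((p:ℝ) ^ η / 2) = 1 := by
        apply Finset.prod_eq_one
        intro p hp
        rw [Finset.mem_filter] at hp
        have hBp : B ≤ p := by have := hp.2; omega
        have hpB : (B:ℝ) ≤ (p:ℝ) := by exact_mod_cast hBp
        have h2p : (2:ℝ) ^ (1/η) ≤ (p:ℝ) := le_trans (Nat.le_ceil _) hpB
        have hppow : (2:ℝ) ≤ (p:ℝ) ^ η := by
          have := Real.rpow_le_rpow (by positivity) h2p hη.le
          rwa [← Real.rpow_mul (by norm_num : (0:ℝ) ≤ 2), one_div,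
            inv_mul_cancel₀ hη.ne', Real.rpow_one] at this
        exact min_eq_left (by linarith)
      have hsub : S.filter (fun p => p < B + 1) ⊆ T := by
        intro p hp
        rw [Finset.mem_filter] at hp
        rw [hT, Finset.mem_filter, Finset.mem_range]
        exact ⟨hp.2, S17_prime hp.1⟩
      have hnn : ∀ p : ℕ, (0:ℝ) ≤ min 1 ((p:ℝ) ^ η / 2) :=
        fun p => le_min zero_le_one (by positivity)
      calc ∏ p ∈ T, min 1 ((p:ℝ) ^ η / 2)
          ≤ ∏ p ∈ S.filter (fun p => p < B + 1), min 1 ((p:ℝ) ^ η / 2) := by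
            rw [← Finset.prod_sdiff hsub]
            exact mul_le_of_le_one_left (Finset.prod_nonneg (fun p _ => hnn p))
              (Finset.prod_le_one (fun p _ => hnn p) (fun p _ => min_le_left _ _))
        _ = ∏ p ∈ S, min 1 ((p:ℝ) ^ η / 2) := by rw [← hsplit, hone, mul_one]
    -- pointwise bound inside the product over S
    have hpt : ∀ p ∈ S, min 1 ((p:ℝ) ^ η / 2) * (p:ℝ) ^ ((1:ℝ)/2 - η) ≤
        Real.sqrt p / 2 := by
      intro p hp
      have hp0 := hppos p hp
      have hsqrt : Real.sqrt p = (p:ℝ) ^ η * (p:ℝ) ^ ((1:ℝ)/2 - η) := by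
        rw [Real.sqrt_eq_rpow, ← Real.rpow_add hp0]
        congr 1
        ring
      have h1 : min 1 ((p:ℝ) ^ η / 2) ≤ (p:ℝ) ^ η / 2 := min_le_right _ _
      have h2 : (0:ℝ) ≤ (p:ℝ) ^ ((1:ℝ)/2 - η) := by positivity
      calc min 1 ((p:ℝ) ^ η / 2) * (p:ℝ) ^ ((1:ℝ)/2 - η)
          ≤ (p:ℝ) ^ η / 2 * (p:ℝ) ^ ((1:ℝ)/2 - η) :=
            mul_le_mul_of_nonneg_right h1 h2
        _ = Real.sqrt p / 2 := by rw [hsqrt]; ring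
    calc (∏ p ∈ T, min 1 ((p:ℝ) ^ η / 2)) * (y17 P n : ℝ) ^ ((1:ℝ)/2 - η)
        ≤ (∏ p ∈ S, min 1 ((p:ℝ) ^ η / 2)) * (y17 P n : ℝ) ^ ((1:ℝ)/2 - η) := by
          apply mul_le_mul_of_nonneg_right hstep1 (by positivity)
      _ = ∏ p ∈ S, (min 1 ((p:ℝ) ^ η / 2) * (p:ℝ) ^ ((1:ℝ)/2 - η)) := by
          rw [hyprod, Finset.prod_mul_distrib]
      _ ≤ ∏ p ∈ S, Real.sqrt p / 2 := by
          apply Finset.prod_le_prod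
          · intro p hp
            have := hppos p hp
            have := le_min zero_le_one (by positivity : (0:ℝ) ≤ (p:ℝ) ^ η / 2)
            positivity
          · exact hpt
      _ = w P n := (w_eq P n).symm

lemma geom_bound {δ : ℝ} (hδ0 : 0 < δ) : ∀ k : ℕ,
    ((2:ℝ) ^ k) ^ (-(1/2 + δ) : ℝ) ≤ (Real.sqrt 2)⁻¹ ^ k := by
  intro k
  have h1 : ((2:ℝ) ^ k) ^ (-(1/2 + δ) : ℝ) ≤ ((2:ℝ) ^ k) ^ (-(1/2) : ℝ) := by
    apply Real.rpow_le_rpow_of_exponent_le (one_le_pow₀ (by norm_num))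
    linarith
  have h2 : ((2:ℝ) ^ k) ^ (-(1/2) : ℝ) = ((2:ℝ) ^ (-(1/2) : ℝ)) ^ k := by
    rw [← Real.rpow_natCast (2:ℝ) k, ← Real.rpow_mul (by norm_num),
      mul_comm, Real.rpow_mul (by norm_num), Real.rpow_natCast]
  have h3 : (2:ℝ) ^ (-(1/2) : ℝ) = (Real.sqrt 2)⁻¹ := by
    rw [Real.sqrt_eq_rpow, ← Real.rpow_neg (by norm_num)]
  rw [h2, h3] at h1
  exact h1

lemma term_bound {P : ℕ} (hP : P.Prime) {δ c : ℝ} (hδ0 : 0 < δ) (hδ1 : δ ≤ 1/4)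
    (hc : 0 < c) (hw : ∀ n, c * (y17 P n : ℝ) ^ ((1:ℝ)/2 - δ/2) ≤ w P n)
    {n : ℕ} (hn : n ≠ 0) :
    (n:ℝ) ^ (-(1/2 + δ) : ℝ) / w P n ≤
      c⁻¹ * (1/(x17 P n : ℝ) ^ ((1:ℝ) + 2*δ)) * (1/(y17 P n : ℝ) ^ ((1:ℝ) + δ/2)) *
        ((Real.sqrt 2)⁻¹ ^ (a17 n) * (Real.sqrt 2)⁻¹ ^ (b17 P n)) := by
  have hkey := i17_key hP n
  set x := x17 P n
  set y := y17 P n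
  set a := a17 n
  set b := b17 P n
  have hx0 : 0 < x := by
    rcases Nat.eq_zero_or_pos x with h | h
    · exfalso; apply hn; rw [← hkey, h]; ring
    · exact h
  have hy0 : 0 < y := Nat.pos_of_ne_zero (y17_ne_zero P n)
  have hxR : (0:ℝ) < x := by exact_mod_cast hx0
  have hyR : (0:ℝ) < y := by exact_mod_cast hy0
  have hPR : (2:ℝ) ≤ P := by exact_mod_cast hP.two_le
  have hwp := w_pos P n
  have hfact : (n:ℝ) = (x:ℝ)^2 * ((y:ℝ) * ((2:ℝ)^a * (P:ℝ)^b)) := by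
    rw [← hkey]; push_cast; ring
  have h1 : (n:ℝ) ^ (-(1/2 + δ) : ℝ) =
      ((x:ℝ)^2) ^ (-(1/2 + δ) : ℝ) * ((y:ℝ) ^ (-(1/2 + δ) : ℝ) *
        (((2:ℝ)^a) ^ (-(1/2 + δ) : ℝ) * ((P:ℝ)^b) ^ (-(1/2 + δ) : ℝ))) := by
    rw [hfact, Real.mul_rpow (by positivity) (by positivity),
      Real.mul_rpow (by positivity) (by positivity),
      Real.mul_rpow (by positivity) (by positivity)]
  have hA : ((x:ℝ)^2) ^ (-(1/2 + δ) : ℝ) = 1/(x:ℝ) ^ ((1:ℝ) + 2*δ) := by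
    rw [← Real.rpow_natCast (x:ℝ) 2, ← Real.rpow_mul (Nat.cast_nonneg x),
      show ((2:ℕ):ℝ) * (-(1/2 + δ)) = -((1:ℝ) + 2*δ) by push_cast; ring,
      Real.rpow_neg (Nat.cast_nonneg x)]
    exact (one_div _).symm
  have hB : (y:ℝ) ^ (-(1/2 + δ) : ℝ) / w P n ≤ c⁻¹ * (1/(y:ℝ) ^ ((1:ℝ) + δ/2)) := by
    have hden : (0:ℝ) < c * (y:ℝ) ^ ((1:ℝ)/2 - δ/2) := by
      have := Real.rpow_pos_of_pos hyR ((1:ℝ)/2 - δ/2)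
      positivity
    have hstep : (y:ℝ) ^ (-(1/2 + δ) : ℝ) / w P n ≤
        (y:ℝ) ^ (-(1/2 + δ) : ℝ) / (c * (y:ℝ) ^ ((1:ℝ)/2 - δ/2)) :=
      div_le_div_of_nonneg_left (by positivity) hden (hw n)
    refine le_trans hstep (le_of_eq ?_)
    calc (y:ℝ) ^ (-(1/2 + δ) : ℝ) / (c * (y:ℝ) ^ ((1:ℝ)/2 - δ/2))
        = ((y:ℝ) ^ ((1:ℝ) + δ/2))⁻¹ * (y:ℝ) ^ ((1:ℝ)/2 - δ/2) /
            (c * (y:ℝ) ^ ((1:ℝ)/2 - δ/2)) := by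
          rw [← Real.rpow_neg (Nat.cast_nonneg y), ← Real.rpow_add hyR]
          congr 1
          ring
      _ = c⁻¹ * (1/(y:ℝ) ^ ((1:ℝ) + δ/2)) := by
          rw [mul_div_mul_comm, div_self (Real.rpow_pos_of_pos hyR _).ne', mul_one,
            div_eq_inv_mul, one_div]
  have hC : ((2:ℝ)^a) ^ (-(1/2 + δ) : ℝ) ≤ (Real.sqrt 2)⁻¹ ^ a := geom_bound hδ0 a
  have hD : ((P:ℝ)^b) ^ (-(1/2 + δ) : ℝ) ≤ (Real.sqrt 2)⁻¹ ^ b := by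
    refine le_trans ?_ (geom_bound hδ0 b)
    apply rpow_base_antitone (by positivity) (pow_le_pow_left₀ (by norm_num) hPR b)
    linarith
  calc (n:ℝ) ^ (-(1/2 + δ) : ℝ) / w P n
      = (1/(x:ℝ) ^ ((1:ℝ) + 2*δ)) * (((y:ℝ) ^ (-(1/2 + δ) : ℝ) / w P n) *
          (((2:ℝ)^a) ^ (-(1/2 + δ) : ℝ) * ((P:ℝ)^b) ^ (-(1/2 + δ) : ℝ))) := by
        rw [h1, hA]; ring
    _ ≤ (1/(x:ℝ) ^ ((1:ℝ) + 2*δ)) * ((c⁻¹ * (1/(y:ℝ) ^ ((1:ℝ) + δ/2))) *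
          ((Real.sqrt 2)⁻¹ ^ a * (Real.sqrt 2)⁻¹ ^ b)) := by
        apply mul_le_mul_of_nonneg_left ?_ (by positivity)
        apply mul_le_mul hB ?_ (by positivity) ?_
        · exact mul_le_mul hC hD (by positivity) (by positivity)
        · have h1 := Real.rpow_pos_of_pos hyR ((1:ℝ) + δ/2)
          positivity
    _ = c⁻¹ * (1/(x:ℝ) ^ ((1:ℝ) + 2*δ)) * (1/(y:ℝ) ^ ((1:ℝ) + δ/2)) *
          ((Real.sqrt 2)⁻¹ ^ a * (Real.sqrt 2)⁻¹ ^ b) := by ring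

lemma G17_summable {c δ : ℝ} (hc : 0 < c) (hδ : 0 < δ) :
    Summable (fun q : ℕ × ℕ × ℕ × ℕ =>
      c⁻¹ * (1/(q.1:ℝ) ^ ((1:ℝ) + 2*δ)) * (1/(q.2.1:ℝ) ^ ((1:ℝ) + δ/2)) *
        ((Real.sqrt 2)⁻¹ ^ q.2.2.1 * (Real.sqrt 2)⁻¹ ^ q.2.2.2)) := by
  have hs2 : (0:ℝ) ≤ (Real.sqrt 2)⁻¹ := by positivity
  have h12 : (1:ℝ) < Real.sqrt 2 := by
    rw [show (1:ℝ) = Real.sqrt 1 by simp]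
    exact Real.sqrt_lt_sqrt (by norm_num) (by norm_num)
  have hs2' : (Real.sqrt 2)⁻¹ < 1 := by
    rw [inv_lt_one_iff₀]
    right; exact h12
  have hgeo : Summable (fun k : ℕ => (Real.sqrt 2)⁻¹ ^ k) :=
    summable_geometric_of_lt_one hs2 hs2'
  have h34 : Summable (fun s : ℕ × ℕ => (Real.sqrt 2)⁻¹ ^ s.1 * (Real.sqrt 2)⁻¹ ^ s.2) :=
    hgeo.mul_of_nonneg hgeo (Pi.le_def.mpr fun i => by positivity) (Pi.le_def.mpr fun i => by positivity)
  have h2 : Summable (fun k : ℕ => 1/(k:ℝ) ^ ((1:ℝ) + δ/2)) :=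
    Real.summable_one_div_nat_rpow.mpr (by linarith)
  have h1 : Summable (fun k : ℕ => c⁻¹ * (1/(k:ℝ) ^ ((1:ℝ) + 2*δ))) :=
    (Real.summable_one_div_nat_rpow.mpr (by linarith)).mul_left _
  have h234 : Summable (fun r : ℕ × ℕ × ℕ => (1/(r.1:ℝ) ^ ((1:ℝ) + δ/2)) *
      ((Real.sqrt 2)⁻¹ ^ r.2.1 * (Real.sqrt 2)⁻¹ ^ r.2.2)) :=
    h2.mul_of_nonneg h34 (Pi.le_def.mpr fun i => by positivity) (Pi.le_def.mpr fun i => by positivity)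
  have hall := h1.mul_of_nonneg h234 (Pi.le_def.mpr fun i => by positivity)
      (Pi.le_def.mpr fun i => by positivity)
  exact hall.congr (fun q => by ring)

/-- For fixed `0 < σ ≤ 1` and prime `P`: for every `ε > 0`,
`∑_{n > Y^σ} 1/(n·w(n)) = O_ε(Y^{−σ/2 + ε})` as `Y → ∞`. -/
theorem stmt17 (σ : ℝ) (hσ0 : 0 < σ) (hσ1 : σ ≤ 1) (P : ℕ) (hP : P.Prime) :
    ∀ ε : ℝ, 0 < ε → ∃ C : ℝ, 0 < C ∧ ∀ Y : ℝ, 1 ≤ Y →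
      (∑' n : ℕ, if Y ^ σ < (n : ℝ) then 1 / ((n : ℝ) * w P n) else 0)
        ≤ C * Y ^ (-σ / 2 + ε) := by
  intro ε hε
  set δ : ℝ := min (ε/σ) (1/4) with hδdef
  have hδ0 : 0 < δ := lt_min (div_pos hε hσ0) (by norm_num)
  have hδ1 : δ ≤ 1/4 := min_le_right _ _
  have hσδ : σ * δ ≤ ε := by
    calc σ * δ ≤ σ * (ε/σ) := mul_le_mul_of_nonneg_left (min_le_left _ _) hσ0.le
      _ = ε := by field_simp
  obtain ⟨c, hc, hw⟩ := w_lower hP (by positivity : (0:ℝ) < δ/2)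
  have hGsum : Summable (fun q : ℕ × ℕ × ℕ × ℕ =>
      c⁻¹ * (1/(q.1:ℝ) ^ ((1:ℝ) + 2*δ)) * (1/(q.2.1:ℝ) ^ ((1:ℝ) + δ/2)) *
        ((Real.sqrt 2)⁻¹ ^ q.2.2.1 * (Real.sqrt 2)⁻¹ ^ q.2.2.2)) :=
    G17_summable hc hδ0
  set G : ℕ × ℕ × ℕ × ℕ → ℝ := fun q =>
    c⁻¹ * (1/(q.1:ℝ) ^ ((1:ℝ) + 2*δ)) * (1/(q.2.1:ℝ) ^ ((1:ℝ) + δ/2)) *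
      ((Real.sqrt 2)⁻¹ ^ q.2.2.1 * (Real.sqrt 2)⁻¹ ^ q.2.2.2) with hG
  have hGnonneg : ∀ q, 0 ≤ G q := by
    intro q
    rw [hG]
    positivity
  have hisum : Summable (fun n : ℕ => G (x17 P n, y17 P n, a17 n, b17 P n)) :=
    hGsum.comp_injective (i17_injective hP)
  refine ⟨∑' n : ℕ, G (x17 P n, y17 P n, a17 n, b17 P n) + 1,
    add_pos_of_nonneg_of_pos (tsum_nonneg (fun n => hGnonneg _)) one_pos, ?_⟩
  intro Y hY
  have hY0 : (0:ℝ) < Y := by linarith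
  have hX1 : (1:ℝ) ≤ Y ^ σ := Real.one_le_rpow hY hσ0.le
  have hX0 : (0:ℝ) < Y ^ σ := by linarith
  have hpoint : ∀ n : ℕ, (if Y ^ σ < (n:ℝ) then 1 / ((n:ℝ) * w P n) else 0) ≤
      (Y ^ σ) ^ (δ - 1/2) * G (x17 P n, y17 P n, a17 n, b17 P n) := by
    intro n
    by_cases hn : Y ^ σ < (n:ℝ)
    · rw [if_pos hn]
      have hn0 : n ≠ 0 := by
        rintro rfl
        push_cast at hn
        linarith
      have hnpos : (0:ℝ) < n := by exact_mod_cast Nat.pos_of_ne_zero hn0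
      have hwp := w_pos P n
      have e2 : (n:ℝ) ^ (δ - 1/2) * (n:ℝ) ^ (-(1/2 + δ) : ℝ) = (n:ℝ)⁻¹ := by
        rw [← Real.rpow_add hnpos, show (δ - 1/2) + (-(1/2 + δ)) = (-1 : ℝ) by ring,
          Real.rpow_neg_one]
      have e1 : 1 / ((n:ℝ) * w P n) =
          (n:ℝ) ^ (δ - 1/2) * ((n:ℝ) ^ (-(1/2 + δ) : ℝ) / w P n) := by
        rw [← mul_div_assoc, e2, one_div, mul_inv, div_eq_mul_inv]
      rw [e1]
      have htb : (n:ℝ) ^ (-(1/2 + δ) : ℝ) / w P n ≤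
          G (x17 P n, y17 P n, a17 n, b17 P n) :=
        term_bound hP hδ0 hδ1 hc hw hn0
      apply mul_le_mul ?_ htb ?_ ?_
      · exact rpow_base_antitone hX0 hn.le (by linarith)
      · exact div_nonneg (Real.rpow_nonneg hnpos.le _) hwp.le
      · exact Real.rpow_nonneg (by linarith) _
    · rw [if_neg hn]
      exact mul_nonneg (Real.rpow_nonneg (by linarith) _) (hGnonneg _)
  have hmul : Summable (fun n : ℕ =>
      (Y ^ σ) ^ (δ - 1/2) * G (x17 P n, y17 P n, a17 n, b17 P n)) :=
    hisum.mul_left _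
  have hfsum : Summable (fun n : ℕ =>
      if Y ^ σ < (n:ℝ) then 1 / ((n:ℝ) * w P n) else 0) := by
    apply Summable.of_nonneg_of_le ?_ hpoint hmul
    intro n
    split
    · exact div_nonneg zero_le_one (mul_nonneg (Nat.cast_nonneg n) (w_pos P n).le)
    · exact le_rfl
  have hexp : (Y ^ σ) ^ (δ - 1/2) ≤ Y ^ (-σ/2 + ε) := by
    rw [← Real.rpow_mul hY0.le]
    apply Real.rpow_le_rpow_of_exponent_le hY
    nlinarith
  calc (∑' n : ℕ, if Y ^ σ < (n:ℝ) then 1 / ((n:ℝ) * w P n) else 0)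
      ≤ ∑' n : ℕ, (Y ^ σ) ^ (δ - 1/2) * G (x17 P n, y17 P n, a17 n, b17 P n) :=
        Summable.tsum_le_tsum hpoint hfsum hmul
    _ = (Y ^ σ) ^ (δ - 1/2) * ∑' n : ℕ, G (x17 P n, y17 P n, a17 n, b17 P n) :=
        tsum_mul_left
    _ ≤ (Y ^ σ) ^ (δ - 1/2) * (∑' n : ℕ, G (x17 P n, y17 P n, a17 n, b17 P n) + 1) := by
        apply mul_le_mul_of_nonneg_left (le_add_of_nonneg_right zero_le_one)
          (Real.rpow_nonneg hX0.le _)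
    _ = (∑' n : ℕ, G (x17 P n, y17 P n, a17 n, b17 P n) + 1) * (Y ^ σ) ^ (δ - 1/2) := by
        ring
    _ ≤ (∑' n : ℕ, G (x17 P n, y17 P n, a17 n, b17 P n) + 1) * Y ^ (-σ/2 + ε) := by
        apply mul_le_mul_of_nonneg_left hexp
          (add_nonneg (tsum_nonneg (fun n => hGnonneg _)) zero_le_one)
end

section
/- With the notation n = x²·y·2^α·P^β (y squarefree, gcd(xy, 2P) = 1) and w(n) = ∏_{p | y} √p/2, for any T ≥ 2, ∑_{n ≤ T} 1/√(n·w(n)) = O_ε(T^{1/4 + ε}). -/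
open Finset

namespace Stmt18Aux

/-- generic injection sum bound -/
lemma sum_le_sum_inj {α β : Type*} [DecidableEq β] {s : Finset α} {t : Finset β}
    (φ : α → β) (hinj : Set.InjOn φ s) (hmap : ∀ a ∈ s, φ a ∈ t)
    (f : α → ℝ) (g : β → ℝ) (hg : ∀ b ∈ t, 0 ≤ g b)
    (hfg : ∀ a ∈ s, f a ≤ g (φ a)) :
    ∑ a ∈ s, f a ≤ ∑ b ∈ t, g b := by
  calc ∑ a ∈ s, f a ≤ ∑ a ∈ s, g (φ a) := Finset.sum_le_sum hfg
    _ = ∑ b ∈ s.image φ, g b := (Finset.sum_image (fun a ha b hb h => hinj ha hb h)).symm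
    _ ≤ ∑ b ∈ t, g b := by
        refine Finset.sum_le_sum_of_subset_of_nonneg ?_ (fun b hb _ => hg b hb)
        intro b hb
        obtain ⟨a, ha, rfl⟩ := Finset.mem_image.mp hb
        exact hmap a ha

/-- harmonic sum bound -/
lemma harmonic_le : ∀ T : ℕ, ∑ y ∈ Finset.Icc 1 T, (1 : ℝ) / y ≤ 1 + Real.log T := by
  intro T
  induction T with
  | zero => simp
  | succ T ih =>
    rw [Finset.sum_Icc_succ_top (by norm_num : 1 ≤ T + 1)]
    rcases Nat.eq_zero_or_pos T with rfl | hT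
    · norm_num
    have hlog : Real.log T + 1 / (T + 1) ≤ Real.log (T + 1) := by
      have hT0 : (0:ℝ) < T := by exact_mod_cast hT
      have h1 : Real.log ((T:ℝ) / (T + 1)) ≤ (T:ℝ) / (T + 1) - 1 :=
        Real.log_le_sub_one_of_pos (by positivity)
      have h2 : Real.log ((T:ℝ) / (T + 1)) = Real.log T - Real.log (T + 1) :=
        Real.log_div (ne_of_gt hT0) (by positivity)
      have h3 : (T:ℝ) / (T + 1) - 1 = -(1 / (T + 1)) := by field_simp; ring
      rw [h2, h3] at h1
      linarith
    push_cast
    push_cast at ih hlog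
    linarith

/-- log is dominated by any positive power -/
lemma one_add_log_le (δ : ℝ) (hδ : 0 < δ) (x : ℝ) (hx : 1 ≤ x) :
    1 + Real.log x ≤ (1 + 1 / δ) * x ^ δ := by
  have hx0 : (0:ℝ) < x := lt_of_lt_of_le one_pos hx
  have h1 : Real.log (x ^ δ) ≤ x ^ δ - 1 := Real.log_le_sub_one_of_pos (by positivity)
  rw [Real.log_rpow hx0] at h1
  have h2 : (1:ℝ) ≤ x ^ δ := Real.one_le_rpow hx (le_of_lt hδ)
  have h3 : Real.log x ≤ (x ^ δ - 1) / δ := by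
    rw [le_div_iff₀ hδ]; linarith [h1]
  have h4 : (x ^ δ - 1) / δ ≤ x ^ δ / δ := by gcongr; linarith
  have h5 : (1 + 1 / δ) * x ^ δ = x ^ δ + x ^ δ / δ := by ring
  linarith

/-- geometric sum bound -/
lemma geom_le (r : ℝ) (h0 : 0 ≤ r) (h1 : r ≤ 3/4) (N : ℕ) :
    ∑ i ∈ Finset.range N, r ^ i ≤ 4 := by
  have hr1 : r < 1 := by linarith
  calc ∑ i ∈ Finset.range N, r ^ i ≤ ∑' i : ℕ, r ^ i := by
        apply Summable.sum_le_tsum _ (fun i _ => by positivity)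
        exact summable_geometric_of_lt_one h0 hr1
    _ = (1 - r)⁻¹ := tsum_geometric_of_lt_one h0 hr1
    _ ≤ 4 := by
        rw [inv_le_comm₀ (by linarith) (by norm_num)]
        linarith

/-- square root part of a number all of whose exponents are even -/
noncomputable def sqrtPart (k : ℕ) : ℕ := k.factorization.prod fun p e => p ^ (e / 2)

lemma sqrtPart_sq {k : ℕ} (hk : k ≠ 0) (h : ∀ p, Even (k.factorization p)) :
    sqrtPart k * sqrtPart k = k := by
  conv_rhs => rw [← Nat.factorization_prod_pow_eq_self hk]
  rw [sqrtPart, Finsupp.prod, Finsupp.prod, ← Finset.prod_mul_distrib]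
  refine Finset.prod_congr rfl fun p hp => ?_
  rw [← pow_add]
  congr 1
  obtain ⟨j, hj⟩ := h p
  omega

lemma sqrt_prod (s : Finset ℕ) (f : ℕ → ℕ) :
    ∏ p ∈ s, Real.sqrt (f p) = Real.sqrt (∏ p ∈ s, (f p : ℝ)) := by
  induction s using Finset.induction_on with
  | empty => simp
  | insert _ _ hx ih =>
    rw [Finset.prod_insert hx, Finset.prod_insert hx, ih, ← Real.sqrt_mul (by positivity)]

/-- the set of odd-exponent primes -/
def S (P n : ℕ) : Finset ℕ :=
  n.primeFactors.filter (fun p => p ≠ 2 ∧ p ≠ P ∧ Odd (n.factorization p))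

def Y (P n : ℕ) : ℕ := ∏ p ∈ S P n, p

lemma prime_of_mem_S {P n p : ℕ} (hp : p ∈ S P n) : p.Prime :=
  Nat.prime_of_mem_primeFactors (Finset.mem_filter.mp hp).1

lemma Y_pos (P n : ℕ) : 0 < Y P n :=
  Finset.prod_pos fun p hp => (prime_of_mem_S hp).pos

lemma Y_dvd (P n : ℕ) : Y P n ∣ n := by
  refine dvd_trans ?_ (Nat.prod_primeFactors_dvd n)
  exact Finset.prod_dvd_prod_of_subset _ _ _ (Finset.filter_subset _ _)

lemma factorization_Y (P n p : ℕ) :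
    (Y P n).factorization p = if p ∈ S P n then 1 else 0 := by
  rw [Y, Nat.factorization_prod (fun q hq => (prime_of_mem_S hq).ne_zero)]
  rw [Finset.sum_apply']
  have : ∀ q ∈ S P n, (Nat.factorization q) p = if q = p then 1 else 0 := by
    intro q hq
    rw [(prime_of_mem_S hq).factorization, Finsupp.single_apply]
  rw [Finset.sum_congr rfl this, Finset.sum_ite_eq' (S P n) p (fun _ => 1)]

lemma w_eq (P n : ℕ) : w P n = Real.sqrt (Y P n) / 2 ^ (S P n).card := by
  rw [w, Y]
  rw [Finset.prod_div_distrib, Finset.prod_const]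
  congr 1
  · rw [show (filter (fun p => p ≠ 2 ∧ p ≠ P ∧ Odd (n.factorization p)) n.primeFactors) = S P n from rfl]
    rw [sqrt_prod (S P n) (fun p => p)]
    congr 1
    push_cast
    rfl

def Special (P m : ℕ) : Prop := ∀ p, p.Prime → p ≠ 2 → p ≠ P → Even (m.factorization p)

lemma special_div (P n : ℕ) (hn : n ≠ 0) : Special P (n / Y P n) := by
  intro p hp hp2 hpP
  rw [Nat.factorization_div (Y_dvd P n)]
  simp only [Finsupp.coe_tsub, Pi.sub_apply]
  rw [factorization_Y]
  by_cases hmem : p ∈ S P n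
  · simp only [hmem, if_true]
    have hodd : Odd (n.factorization p) := (Finset.mem_filter.mp hmem).2.2.2
    obtain ⟨j, hj⟩ := hodd
    rw [hj]
    exact ⟨j, by omega⟩
  · simp only [hmem, if_false, Nat.sub_zero]
    by_cases hpf : p ∈ n.primeFactors
    · have : ¬ Odd (n.factorization p) := by
        intro hodd
        exact hmem (Finset.mem_filter.mpr ⟨hpf, hp2, hpP, hodd⟩)
      exact Nat.not_odd_iff_even.mp this
    · have h0 : n.factorization p = 0 := by
        rw [← Nat.support_factorization] at hpf
        exact Finsupp.notMem_support_iff.mp hpf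
      rw [h0]
      exact Even.zero

lemma pow_card_le (P n : ℕ) (ε' : ℝ) (hε : 0 < ε') :
    (2:ℝ) ^ (S P n).card ≤ 2 ^ (⌈(2:ℝ) ^ (1/ε')⌉₊ + 1) * (Y P n : ℝ) ^ ε' := by
  set B := ⌈(2:ℝ) ^ (1/ε')⌉₊ with hB
  have key : (2:ℝ) ^ (S P n).card = ∏ p ∈ S P n, (2:ℝ) := by
    rw [Finset.prod_const]
  rw [key, ← Finset.prod_filter_mul_prod_filter_not (S P n) (fun p => p ≤ B)]
  have h1 : ∏ p ∈ (S P n).filter (fun p => p ≤ B), (2:ℝ) ≤ 2 ^ (B + 1) := by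
    rw [Finset.prod_const]
    apply pow_le_pow_right₀ (by norm_num)
    calc ((S P n).filter (fun p => p ≤ B)).card ≤ (Finset.range (B+1)).card := by
          apply Finset.card_le_card
          intro p hp
          rw [Finset.mem_range]
          exact Nat.lt_succ_of_le (Finset.mem_filter.mp hp).2
      _ = B + 1 := Finset.card_range _
  have h2 : ∏ p ∈ (S P n).filter (fun p => ¬ p ≤ B), (2:ℝ)
      ≤ (Y P n : ℝ) ^ ε' := by
    have step1 : ∏ p ∈ (S P n).filter (fun p => ¬ p ≤ B), (2:ℝ)
        ≤ ∏ p ∈ (S P n).filter (fun p => ¬ p ≤ B), (p:ℝ) ^ ε' := by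
      apply Finset.prod_le_prod (fun _ _ => by norm_num)
      intro p hp
      have hpB : B < p := Nat.lt_of_not_le (Finset.mem_filter.mp hp).2
      have hle : (2:ℝ) ^ (1/ε') ≤ (p:ℝ) := by
        calc (2:ℝ) ^ (1/ε') ≤ (B:ℝ) := Nat.le_ceil _
          _ ≤ (p:ℝ) := by exact_mod_cast hpB.le
      calc (2:ℝ) = ((2:ℝ) ^ (1/ε')) ^ ε' := by
            rw [← Real.rpow_mul (by norm_num), one_div_mul_cancel (ne_of_gt hε),
              Real.rpow_one]
        _ ≤ (p:ℝ) ^ ε' := Real.rpow_le_rpow (by positivity) hle hε.le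
    have step2 : ∏ p ∈ (S P n).filter (fun p => ¬ p ≤ B), (p:ℝ) ^ ε'
        = (∏ p ∈ (S P n).filter (fun p => ¬ p ≤ B), (p:ℝ)) ^ ε' := by
      rw [← Real.finset_prod_rpow _ _ (fun p _ => by positivity)]
    have step3 : (∏ p ∈ (S P n).filter (fun p => ¬ p ≤ B), (p:ℝ))
        ≤ (Y P n : ℝ) := by
      have : (∏ p ∈ (S P n).filter (fun p => ¬ p ≤ B), p) ≤ Y P n := by
        rw [Y]
        apply Finset.prod_le_prod_of_subset_of_one_le' (Finset.filter_subset _ _)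
        intro p hp _
        exact (prime_of_mem_S hp).one_le
      calc (∏ p ∈ (S P n).filter (fun p => ¬ p ≤ B), (p:ℝ))
          = ((∏ p ∈ (S P n).filter (fun p => ¬ p ≤ B), p : ℕ) : ℝ) := by push_cast; rfl
        _ ≤ (Y P n : ℝ) := by exact_mod_cast this
    calc _ ≤ _ := step1
      _ = _ := step2
      _ ≤ (Y P n : ℝ) ^ ε' := Real.rpow_le_rpow (by positivity) step3 hε.le
  calc _ ≤ (2:ℝ) ^ (B+1) * (Y P n : ℝ) ^ ε' := by
        apply mul_le_mul h1 h2 (Finset.prod_nonneg fun _ _ => by norm_num) (by positivity)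
    _ = _ := rfl

lemma term_bound (P n : ℕ) (hn : 1 ≤ n) (ε' : ℝ) (hε : 0 < ε') :
    1 / Real.sqrt ((n : ℝ) * w P n) ≤
      Real.sqrt ((2:ℝ) ^ (⌈(2:ℝ) ^ (1/ε')⌉₊ + 1)) * (Y P n : ℝ) ^ (-((3:ℝ)/4 - ε'/2))
        * (Real.sqrt ((n / Y P n : ℕ) : ℝ))⁻¹ := by
  set K : ℝ := (2:ℝ) ^ (⌈(2:ℝ) ^ (1/ε')⌉₊ + 1) with hK
  have hK0 : 0 < K := by positivity
  set y := Y P n with hy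
  set m := n / Y P n with hm
  have hy1 : 1 ≤ y := Y_pos P n
  have hym : y * m = n := Nat.mul_div_cancel' (Y_dvd P n)
  have hm1 : 1 ≤ m := by
    rcases Nat.eq_zero_or_pos m with h0 | h
    · rw [h0, Nat.mul_zero] at hym; omega
    · exact h
  have hy0 : (0:ℝ) < y := by exact_mod_cast hy1
  have hm0 : (0:ℝ) < m := by exact_mod_cast hm1
  have hcast : (n:ℝ) = (y:ℝ) * m := by exact_mod_cast hym.symm
  have h2w : (2:ℝ) ^ (S P n).card ≤ K * (y:ℝ) ^ ε' := pow_card_le P n ε' hε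
  have hrpow : (y:ℝ) ^ ((3:ℝ)/2 - ε') = (y:ℝ) * Real.sqrt y * ((y:ℝ) ^ ε')⁻¹ := by
    rw [show (3:ℝ)/2 - ε' = 1 + 1/2 + -ε' by ring, Real.rpow_add hy0, Real.rpow_add hy0,
      Real.rpow_one, ← Real.sqrt_eq_rpow, Real.rpow_neg hy0.le]
  have hlow : (m:ℝ) * (y:ℝ) ^ ((3:ℝ)/2 - ε') / K ≤ (n:ℝ) * w P n := by
    rw [w_eq, hcast, hrpow]
    have heq : (m:ℝ) * ((y:ℝ) * Real.sqrt y * ((y:ℝ) ^ ε')⁻¹) / K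
        = ((y:ℝ) * m * Real.sqrt y) / (K * (y:ℝ) ^ ε') := by
      field_simp
    rw [heq]
    have h1 : (y:ℝ) * m * (Real.sqrt (y:ℝ) / 2 ^ (S P n).card)
        = ((y:ℝ) * m * Real.sqrt y) / (2 ^ (S P n).card) := by ring
    rw [h1]
    apply div_le_div_of_nonneg_left (by positivity) (by positivity) h2w
  have hlow0 : (0:ℝ) < (m:ℝ) * (y:ℝ) ^ ((3:ℝ)/2 - ε') / K := by positivity
  have step : 1 / Real.sqrt ((n : ℝ) * w P n)
      ≤ 1 / Real.sqrt ((m:ℝ) * (y:ℝ) ^ ((3:ℝ)/2 - ε') / K) := by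
    apply one_div_le_one_div_of_le (Real.sqrt_pos.mpr hlow0) (Real.sqrt_le_sqrt hlow)
  refine step.trans (le_of_eq ?_)
  have hsq : Real.sqrt ((m:ℝ) * (y:ℝ) ^ ((3:ℝ)/2 - ε') / K)
      = Real.sqrt m * (y:ℝ) ^ ((3:ℝ)/4 - ε'/2) / Real.sqrt K := by
    rw [Real.sqrt_div (by positivity), Real.sqrt_mul (by positivity)]
    congr 1
    rw [Real.sqrt_eq_rpow ((y:ℝ) ^ ((3:ℝ)/2 - ε')), ← Real.rpow_mul hy0.le]
    congr 1
    ring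
  rw [hsq, Real.rpow_neg hy0.le]
  have hsm : (0:ℝ) < Real.sqrt m := Real.sqrt_pos.mpr hm0
  have hsK : (0:ℝ) < Real.sqrt K := Real.sqrt_pos.mpr hK0
  have hyr : (0:ℝ) < (y:ℝ) ^ ((3:ℝ)/4 - ε'/2) := by positivity
  field_simp

lemma special_decomp (P : ℕ) {m : ℕ} (hm : m ≠ 0) (hsp : Special P m) :
    2 ^ (m.factorization 2) * P ^ ((ordCompl[2] m).factorization P) *
      (sqrtPart (ordCompl[P] (ordCompl[2] m)) * sqrtPart (ordCompl[P] (ordCompl[2] m))) = m := by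
  set m1 := ordCompl[2] m with hm1
  set m2 := ordCompl[P] m1 with hm2
  have hm1ne : m1 ≠ 0 := (Nat.ordCompl_pos 2 hm).ne'
  have hm2ne : m2 ≠ 0 := (Nat.ordCompl_pos P hm1ne).ne'
  have h1 : 2 ^ (m.factorization 2) * m1 = m := Nat.ordProj_mul_ordCompl_eq_self m 2
  have h2 : P ^ (m1.factorization P) * m2 = m1 := Nat.ordProj_mul_ordCompl_eq_self m1 P
  have heven : ∀ p, Even (m2.factorization p) := by
    intro p
    by_cases hp : p.Prime
    · rw [hm2, Nat.factorization_ordCompl m1 P]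
      by_cases hpP : p = P
      · rw [hpP, Finsupp.erase_same]; exact Even.zero
      · rw [Finsupp.erase_ne hpP, hm1, Nat.factorization_ordCompl m 2]
        by_cases hp2 : p = 2
        · rw [hp2, Finsupp.erase_same]; exact Even.zero
        · rw [Finsupp.erase_ne hp2]
          exact hsp p hp hp2 hpP
    · rw [Nat.factorization_eq_zero_of_not_prime _ hp]; exact Even.zero
  rw [sqrtPart_sq hm2ne heven, mul_assoc, h2, h1]

/-- sum over special numbers -/
lemma special_sum (P : ℕ) (hP : P.Prime) (T : ℕ) (hT : 1 ≤ T) :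
    ∑ m ∈ @Finset.filter _ (Special P) (Classical.decPred _) (Finset.Icc 1 T),
      (Real.sqrt m)⁻¹ ≤ 16 * (1 + Real.log T) := by
  classical
  have hsqrt2 : (4/3 : ℝ) ≤ Real.sqrt 2 := by
    rw [show (4/3:ℝ) = Real.sqrt ((4/3)^2) from (Real.sqrt_sq (by norm_num)).symm]
    apply Real.sqrt_le_sqrt; norm_num
  have hr : ((Real.sqrt 2)⁻¹ : ℝ) ≤ 3/4 := by
    rw [show (3/4:ℝ) = (4/3:ℝ)⁻¹ by norm_num]
    exact inv_anti₀ (by norm_num) hsqrt2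
  have hq : ((Real.sqrt P)⁻¹ : ℝ) ≤ 3/4 := by
    refine le_trans ?_ hr
    apply inv_anti₀ (Real.sqrt_pos.mpr (by norm_num))
    apply Real.sqrt_le_sqrt
    exact_mod_cast hP.two_le
  have hbound := sum_le_sum_inj
    (s := @Finset.filter _ (Special P) (Classical.decPred _) (Finset.Icc 1 T))
    (t := (Finset.range (T+1)) ×ˢ ((Finset.range (T+1)) ×ˢ (Finset.Icc 1 T)))
    (φ := fun m => (m.factorization 2, ((ordCompl[2] m).factorization P,
      sqrtPart (ordCompl[P] (ordCompl[2] m)))))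
    (f := fun m => (Real.sqrt m)⁻¹)
    (g := fun x => ((Real.sqrt 2)⁻¹) ^ x.1 * (((Real.sqrt P)⁻¹) ^ x.2.1 * ((x.2.2 : ℝ))⁻¹))
    ?_ ?_ ?_ ?_
  · refine hbound.trans ?_
    rw [Finset.sum_product]
    simp only [Finset.sum_product]
    simp only [← Finset.mul_sum, ← Finset.sum_mul]
    have hlog0 : (0:ℝ) ≤ Real.log T := Real.log_nonneg (by exact_mod_cast hT)
    have hA : ∑ a ∈ Finset.range (T+1), ((Real.sqrt 2)⁻¹ : ℝ) ^ a ≤ 4 :=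
      geom_le _ (by positivity) hr _
    have hB : ∑ b ∈ Finset.range (T+1), ((Real.sqrt P)⁻¹ : ℝ) ^ b ≤ 4 :=
      geom_le _ (by positivity) hq _
    have hC : ∑ c ∈ Finset.Icc 1 T, ((c : ℝ))⁻¹ ≤ 1 + Real.log T := by
      have := harmonic_le T
      simpa [one_div] using this
    have hA0 : (0:ℝ) ≤ ∑ a ∈ Finset.range (T+1), ((Real.sqrt 2)⁻¹ : ℝ) ^ a :=
      Finset.sum_nonneg fun _ _ => by positivity
    have hB0 : (0:ℝ) ≤ ∑ b ∈ Finset.range (T+1), ((Real.sqrt P)⁻¹ : ℝ) ^ b :=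
      Finset.sum_nonneg fun _ _ => by positivity
    have hC0 : (0:ℝ) ≤ ∑ c ∈ Finset.Icc 1 T, ((c : ℝ))⁻¹ :=
      Finset.sum_nonneg fun _ _ => by positivity
    calc (∑ a ∈ Finset.range (T+1), ((Real.sqrt 2)⁻¹ : ℝ) ^ a) *
          ((∑ b ∈ Finset.range (T+1), ((Real.sqrt P)⁻¹ : ℝ) ^ b)
            * (∑ c ∈ Finset.Icc 1 T, ((c : ℝ))⁻¹))
        ≤ 4 * (4 * (1 + Real.log T)) := by
          apply mul_le_mul hA ?_ (by positivity) (by norm_num)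
          apply mul_le_mul hB hC hC0 (by norm_num)
      _ = 16 * (1 + Real.log T) := by ring
  · -- injectivity
    intro m hm m' hm' heq
    simp only [Finset.mem_coe, Finset.mem_filter, Finset.mem_Icc] at hm hm'
    have h1 := special_decomp P (by omega : m ≠ 0) hm.2
    have h2 := special_decomp P (by omega : m' ≠ 0) hm'.2
    simp only [Prod.mk.injEq] at heq
    have key : 2 ^ (m.factorization 2) * P ^ ((ordCompl[2] m).factorization P) *
        (sqrtPart (ordCompl[P] (ordCompl[2] m)) * sqrtPart (ordCompl[P] (ordCompl[2] m)))
        = 2 ^ (m'.factorization 2) * P ^ ((ordCompl[2] m').factorization P) *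
          (sqrtPart (ordCompl[P] (ordCompl[2] m')) * sqrtPart (ordCompl[P] (ordCompl[2] m'))) := by
      rw [heq.2.2, heq.2.1, heq.1]
    rw [h1, h2] at key
    exact key
  · -- maps into t
    intro m hm
    simp only [Finset.mem_filter, Finset.mem_Icc] at hm
    obtain ⟨⟨hm1, hmT⟩, hsp⟩ := hm
    have hmne : m ≠ 0 := by omega
    have hdecomp := special_decomp P hmne hsp
    set a := m.factorization 2
    set b := (ordCompl[2] m).factorization P
    set s := sqrtPart (ordCompl[P] (ordCompl[2] m)) with hs
    simp only [Finset.mem_product, Finset.mem_range, Finset.mem_Icc]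
    have hsne : s * s ≠ 0 := by
      intro h
      rw [h, Nat.mul_zero] at hdecomp
      omega
    have hss : 0 < s * s := Nat.pos_of_ne_zero hsne
    have h2a : 2 ^ a ≤ m := by
      calc 2 ^ a ≤ 2 ^ a * (P ^ b * (s * s)) :=
            Nat.le_mul_of_pos_right _ (Nat.mul_pos (pow_pos hP.pos b) hss)
        _ = m := by rw [← hdecomp]; ring
    have hPb : P ^ b ≤ m := by
      calc P ^ b ≤ P ^ b * (2 ^ a * (s * s)) :=
            Nat.le_mul_of_pos_right _ (Nat.mul_pos (pow_pos (by norm_num) a) hss)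
        _ = m := by rw [← hdecomp]; ring
    have hspos : 0 < s := by
      rcases Nat.eq_zero_or_pos s with h0 | hpos
      · exact absurd (by rw [h0]) hsne
      · exact hpos
    have hsm : s * s ≤ m := by
      calc s * s ≤ (s * s) * (2 ^ a * P ^ b) :=
            Nat.le_mul_of_pos_right _
              (Nat.mul_pos (pow_pos (by norm_num) a) (pow_pos hP.pos b))
        _ = m := by rw [← hdecomp]; ring
    refine ⟨?_, ?_, ?_, ?_⟩
    · have := Nat.lt_two_pow_self (n := a)
      omega
    · have h2b : 2 ^ b ≤ P ^ b := Nat.pow_le_pow_left hP.two_le b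
      have := Nat.lt_two_pow_self (n := b)
      omega
    · exact hspos
    · calc s ≤ s * s := Nat.le_mul_of_pos_right s hspos
        _ ≤ m := hsm
        _ ≤ T := hmT
  · -- g nonneg
    intro x _
    positivity
  · -- pointwise bound (equality)
    intro m hm
    simp only [Finset.mem_filter, Finset.mem_Icc] at hm
    obtain ⟨⟨hm1, hmT⟩, hsp⟩ := hm
    have hmne : m ≠ 0 := by omega
    have hdecomp := special_decomp P hmne hsp
    set a := m.factorization 2
    set b := (ordCompl[2] m).factorization P
    set s := sqrtPart (ordCompl[P] (ordCompl[2] m))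
    have hcast : (m : ℝ) = 2 ^ a * (P:ℝ) ^ b * (s:ℝ) ^ 2 := by
      rw [← hdecomp]; push_cast; ring
    have hsqrtm : Real.sqrt m = (Real.sqrt 2) ^ a * ((Real.sqrt P) ^ b * (s:ℝ)) := by
      rw [hcast, show (2:ℝ) ^ a * (P:ℝ) ^ b * (s:ℝ) ^ 2
          = ((Real.sqrt 2) ^ a * ((Real.sqrt P) ^ b * (s:ℝ))) ^ 2 by
        rw [mul_pow, mul_pow, ← pow_mul, ← pow_mul, mul_comm a 2, mul_comm b 2,
          pow_mul, pow_mul, Real.sq_sqrt (by norm_num : (0:ℝ) ≤ 2),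
          Real.sq_sqrt (by positivity : (0:ℝ) ≤ (P:ℝ))]
        ring]
      exact Real.sqrt_sq (by positivity)
    dsimp only
    rw [hsqrtm]
    rw [mul_inv, mul_inv, inv_pow, inv_pow]

lemma ysum_le (T : ℕ) (hT : 1 ≤ T) (σ : ℝ) (hσ0 : 0 ≤ σ) (hσ1 : σ ≤ 1) :
    ∑ y ∈ Finset.Icc 1 T, (y:ℝ) ^ (-σ) ≤ (T:ℝ) ^ (1 - σ) * (1 + Real.log T) := by
  have hT0 : (0:ℝ) < T := by exact_mod_cast hT
  have step : ∀ y ∈ Finset.Icc 1 T, (y:ℝ) ^ (-σ) ≤ (T:ℝ) ^ (1 - σ) * (y:ℝ)⁻¹ := by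
    intro y hy
    rw [Finset.mem_Icc] at hy
    have hy0 : (0:ℝ) < y := by exact_mod_cast hy.1
    have h1 : (y:ℝ) ^ (-σ) = (y:ℝ) ^ ((1:ℝ) - σ) * (y:ℝ)⁻¹ := by
      rw [show (-σ : ℝ) = (1 - σ) + (-1) by ring, Real.rpow_add hy0, Real.rpow_neg_one]
    rw [h1]
    apply mul_le_mul_of_nonneg_right ?_ (by positivity)
    exact Real.rpow_le_rpow hy0.le (by exact_mod_cast hy.2) (by linarith)
  calc ∑ y ∈ Finset.Icc 1 T, (y:ℝ) ^ (-σ)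
      ≤ ∑ y ∈ Finset.Icc 1 T, (T:ℝ) ^ (1 - σ) * (y:ℝ)⁻¹ := Finset.sum_le_sum step
    _ = (T:ℝ) ^ (1 - σ) * ∑ y ∈ Finset.Icc 1 T, (y:ℝ)⁻¹ := by rw [← Finset.mul_sum]
    _ ≤ (T:ℝ) ^ (1 - σ) * (1 + Real.log T) := by
        apply mul_le_mul_of_nonneg_left ?_ (by positivity)
        simpa [one_div] using harmonic_le T

theorem main_small (P : ℕ) (hP : P.Prime) (ε : ℝ) (hε : 0 < ε) (hε4 : ε ≤ 1/4) :
    ∃ C : ℝ, 0 < C ∧ ∀ T : ℕ, 2 ≤ T →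
      (∑ n ∈ Finset.Icc 1 T, 1 / Real.sqrt ((n : ℝ) * w P n))
        ≤ C * (T : ℝ) ^ ((1 : ℝ) / 4 + ε) := by
  classical
  set K : ℝ := (2:ℝ) ^ (⌈(2:ℝ) ^ (1/ε)⌉₊ + 1) with hK
  have hK0 : (0:ℝ) < K := by positivity
  set σ : ℝ := 3/4 - ε/2 with hσ
  refine ⟨16 * Real.sqrt K * (1 + 8/ε)^2, by positivity, ?_⟩
  intro T hT
  have hT1 : 1 ≤ T := by omega
  have hT0 : (0:ℝ) < T := by exact_mod_cast hT1
  have hT1' : (1:ℝ) ≤ T := by exact_mod_cast hT1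
  -- step 1: inject into pairs
  have step1 : (∑ n ∈ Finset.Icc 1 T, 1 / Real.sqrt ((n : ℝ) * w P n))
      ≤ ∑ x ∈ (Finset.Icc 1 T) ×ˢ
          (@Finset.filter _ (Special P) (Classical.decPred _) (Finset.Icc 1 T)),
        (Real.sqrt K * (x.1:ℝ) ^ (-σ)) * (Real.sqrt (x.2:ℝ))⁻¹ := by
    apply sum_le_sum_inj (φ := fun n => (Y P n, n / Y P n))
    · intro n hn n' hn' heq
      simp only [Finset.mem_coe, Finset.mem_Icc] at hn hn'
      simp only [Prod.mk.injEq] at heq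
      have h1 : Y P n * (n / Y P n) = n := Nat.mul_div_cancel' (Y_dvd P n)
      have h2 : Y P n' * (n' / Y P n') = n' := Nat.mul_div_cancel' (Y_dvd P n')
      have key : Y P n * (n / Y P n) = Y P n' * (n' / Y P n') := by rw [heq.2, heq.1]
      rw [h1, h2] at key
      exact key
    · intro n hn
      rw [Finset.mem_Icc] at hn
      have hn0 : n ≠ 0 := by omega
      have hYd := Y_dvd P n
      have hY1 : 1 ≤ Y P n := Y_pos P n
      have hYn : Y P n ≤ n := Nat.le_of_dvd (by omega) hYd
      have hmd : n / Y P n ∣ n := Nat.div_dvd_of_dvd hYd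
      have hm1 : 1 ≤ n / Y P n := Nat.div_pos hYn (Y_pos P n)
      have hmn : n / Y P n ≤ n := Nat.le_of_dvd (by omega) hmd
      simp only [Finset.mem_product, Finset.mem_filter, Finset.mem_Icc]
      exact ⟨⟨hY1, le_trans hYn hn.2⟩, ⟨hm1, le_trans hmn hn.2⟩, special_div P n hn0⟩
    · intro x _
      positivity
    · intro n hn
      rw [Finset.mem_Icc] at hn
      have := term_bound P n hn.1 ε hε
      dsimp only
      rw [mul_assoc]
      rw [mul_assoc] at this
      exact this
  -- step 2: factor the double sum
  have step2 : ∑ x ∈ (Finset.Icc 1 T) ×ˢ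
        (@Finset.filter _ (Special P) (Classical.decPred _) (Finset.Icc 1 T)),
      (Real.sqrt K * (x.1:ℝ) ^ (-σ)) * (Real.sqrt (x.2:ℝ))⁻¹
      = (∑ y ∈ Finset.Icc 1 T, Real.sqrt K * (y:ℝ) ^ (-σ)) *
        (∑ m ∈ @Finset.filter _ (Special P) (Classical.decPred _) (Finset.Icc 1 T),
          (Real.sqrt (m:ℝ))⁻¹) := by
    rw [Finset.sum_product]
    simp only [← Finset.mul_sum, ← Finset.sum_mul]
  have hmsum := special_sum P hP T hT1
  have hysum := ysum_le T hT1 σ (by rw [hσ]; linarith) (by rw [hσ]; linarith)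
  have hlog0 : (0:ℝ) ≤ Real.log T := Real.log_nonneg hT1'
  have hlog : 1 + Real.log T ≤ (1 + 8/ε) * (T:ℝ) ^ (ε/8) := by
    have := one_add_log_le (ε/8) (by linarith) (T:ℝ) hT1'
    rw [show (1:ℝ) + 1/(ε/8) = 1 + 8/ε by field_simp] at this
    exact this
  have hTpow0 : (0:ℝ) ≤ (T:ℝ) ^ ((1:ℝ) - σ) := by positivity
  have hmsum0 : (0:ℝ) ≤ ∑ m ∈ @Finset.filter _ (Special P) (Classical.decPred _)
      (Finset.Icc 1 T), (Real.sqrt (m:ℝ))⁻¹ :=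
    Finset.sum_nonneg fun _ _ => by positivity
  calc (∑ n ∈ Finset.Icc 1 T, 1 / Real.sqrt ((n : ℝ) * w P n))
      ≤ _ := step1
    _ = _ := step2
    _ ≤ (Real.sqrt K * ((T:ℝ) ^ ((1:ℝ) - σ) * (1 + Real.log T))) * (16 * (1 + Real.log T)) := by
        apply mul_le_mul ?_ hmsum ?_ ?_
        · rw [← Finset.mul_sum]
          apply mul_le_mul_of_nonneg_left hysum (Real.sqrt_nonneg K)
        · exact hmsum0
        · positivity
    _ ≤ (Real.sqrt K * ((T:ℝ) ^ ((1:ℝ) - σ) * ((1 + 8/ε) * (T:ℝ) ^ (ε/8)))) *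
          (16 * ((1 + 8/ε) * (T:ℝ) ^ (ε/8))) := by
        apply mul_le_mul ?_ ?_ (by positivity) (by positivity)
        · apply mul_le_mul_of_nonneg_left ?_ (Real.sqrt_nonneg K)
          exact mul_le_mul_of_nonneg_left hlog hTpow0
        · exact mul_le_mul_of_nonneg_left hlog (by norm_num)
    _ = 16 * Real.sqrt K * (1 + 8/ε)^2 *
          ((T:ℝ) ^ ((1:ℝ) - σ) * ((T:ℝ) ^ (ε/8) * (T:ℝ) ^ (ε/8))) := by ring
    _ = 16 * Real.sqrt K * (1 + 8/ε)^2 * (T:ℝ) ^ ((1:ℝ) - σ + ε/8 + ε/8) := by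
        rw [← Real.rpow_add hT0, ← Real.rpow_add hT0]
        ring_nf
    _ ≤ 16 * Real.sqrt K * (1 + 8/ε)^2 * (T:ℝ) ^ ((1:ℝ)/4 + ε) := by
        apply mul_le_mul_of_nonneg_left ?_ (by positivity)
        apply Real.rpow_le_rpow_of_exponent_le hT1'
        rw [hσ]
        linarith

end Stmt18Aux

/-- For every `ε > 0` there is `C` with
`∑_{n ≤ T} 1/√(n·w(n)) ≤ C·T^{1/4 + ε}` for all `T ≥ 2`. -/
theorem stmt18 (P : ℕ) (hP : P.Prime) :
    ∀ ε : ℝ, 0 < ε → ∃ C : ℝ, 0 < C ∧ ∀ T : ℕ, 2 ≤ T →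
      (∑ n ∈ Finset.Icc 1 T, 1 / Real.sqrt ((n : ℝ) * w P n))
        ≤ C * (T : ℝ) ^ ((1 : ℝ) / 4 + ε) := by
  intro ε hε
  obtain ⟨C, hC0, hC⟩ := Stmt18Aux.main_small P hP (min ε (1/4))
    (lt_min hε (by norm_num)) (min_le_right _ _)
  refine ⟨C, hC0, fun T hT => ?_⟩
  refine (hC T hT).trans ?_
  apply mul_le_mul_of_nonneg_left ?_ hC0.le
  have hT1' : (1:ℝ) ≤ (T:ℝ) := by exact_mod_cast (by omega : 1 ≤ T)
  apply Real.rpow_le_rpow_of_exponent_le hT1'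
  have := min_le_left ε (1/4)
  linarith
end
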